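/- For all x > 1/√2 and y > 0, the partial derivative in x of h(x,y) = (1/(x+y+1))·[x + x(x+1)/(2(x+y))] − ψ(x+y+1) + ψ(y+1) is bounded above by ((1−2x²)y − 2x³ − x²)/(2(x+y)²(x+y+1)²), which is negative. -/

import Mathlib

/-!
Since `1/Γ` is entire, `log Γ` is smooth on `(0, ∞)`, and its derivative `ψ` satisfies
`ψ'(z) - ψ'(z + 1) = 1/z²` together with `ψ' ≥ 0` (log-convexity of `Γ`). The function
`f(z) = 1/z + 1/(2z²)` tends to `0` and satisfies
`f(z) - f(z + 1) = 1/z² - 1/(2z²(z + 1)²) ≤ 1/z²`, so telescoping gives `f ≤ ψ'`.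
Differentiating `h` in `x` and bounding `ψ'(x + y + 1)` below by `f(x + y + 1)` leaves exactly
the stated fraction, whose numerator is negative once `2x² > 1`.
-/

noncomputable def psi (z : ℝ) : ℝ := deriv (fun t => Real.log (Real.Gamma t)) z

noncomputable def h (x y : ℝ) : ℝ :=
  (1 / (x + y + 1)) * (x + x * (x + 1) / (2 * (x + y))) - psi (x + y + 1) + psi (y + 1)

open Real Set Filter Topology

lemma Real.contDiff_inv_Gamma : ContDiff ℝ ⊤ fun t : ℝ => (Gamma t)⁻¹ := by
  have hC : ContDiff ℝ ⊤ fun s : ℂ => (Complex.Gamma s)⁻¹ :=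
    Complex.differentiable_one_div_Gamma.contDiff.restrict_scalars ℝ
  convert Complex.reCLM.contDiff.comp (hC.comp Complex.ofRealCLM.contDiff) using 1
  ext t
  simp [← Complex.ofReal_inv, Complex.Gamma_ofReal]

lemma Real.contDiffOn_log_Gamma : ContDiffOn ℝ ⊤ (fun t => log (Gamma t)) (Ioi 0) := by
  intro t ht
  simpa only [log_inv, neg_neg] using
    (contDiff_inv_Gamma.contDiffAt.log (inv_ne_zero (Gamma_pos_of_pos ht).ne')).neg.contDiffWithinAt

lemma Real.differentiableAt_log_Gamma {z : ℝ} (hz : 0 < z) :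
    DifferentiableAt ℝ (fun t => log (Gamma t)) z :=
  (contDiffOn_log_Gamma.contDiffAt (Ioi_mem_nhds hz)).differentiableAt (by simp)

lemma contDiffOn_psi : ContDiffOn ℝ ⊤ psi (Ioi 0) :=
  contDiffOn_log_Gamma.deriv_of_isOpen isOpen_Ioi le_top

lemma differentiableAt_psi {z : ℝ} (hz : 0 < z) : DifferentiableAt ℝ psi z :=
  (contDiffOn_psi.contDiffAt (Ioi_mem_nhds hz)).differentiableAt (by simp)

lemma psi_add_one {z : ℝ} (hz : 0 < z) : psi (z + 1) = psi z + z⁻¹ := by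
  have hrec : HasDerivAt (fun t => log (Gamma (t + 1))) (psi z + z⁻¹) z := by
    refine ((differentiableAt_log_Gamma hz).hasDerivAt.fun_add
      (hasDerivAt_log hz.ne')).congr_of_eventuallyEq ?_
    filter_upwards [eventually_gt_nhds hz] with t ht
    rw [Gamma_add_one ht.ne', log_mul ht.ne' (Gamma_pos_of_pos ht).ne', add_comm]
  exact ((differentiableAt_log_Gamma (by linarith)).hasDerivAt.comp_add_const z 1).unique hrec

lemma deriv_psi_add_one {z : ℝ} (hz : 0 < z) :
    deriv psi (z + 1) = deriv psi z - (z ^ 2)⁻¹ := by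
  have hrec : HasDerivAt (fun t => psi (t + 1)) (deriv psi z + -(z ^ 2)⁻¹) z := by
    refine ((differentiableAt_psi hz).hasDerivAt.add
      (hasDerivAt_inv hz.ne')).congr_of_eventuallyEq ?_
    filter_upwards [eventually_gt_nhds hz] with t ht
    exact psi_add_one ht
  rw [((differentiableAt_psi (by linarith)).hasDerivAt.comp_add_const z 1).unique hrec,
    sub_eq_add_neg]

lemma monotoneOn_psi : MonotoneOn psi (Ioi 0) :=
  convexOn_log_Gamma.monotoneOn_deriv fun _ hz => differentiableAt_log_Gamma hz

lemma deriv_psi_nonneg {z : ℝ} (hz : 0 < z) : 0 ≤ deriv psi z := by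
  rw [← derivWithin_of_isOpen isOpen_Ioi hz]
  exact monotoneOn_psi.derivWithin_nonneg

lemma le_of_forall_sub_add_one_le {f g : ℝ → ℝ} (hf : Tendsto f atTop (𝓝 0))
    (hg : ∀ z > 0, 0 ≤ g z) (hfg : ∀ z > 0, f z - f (z + 1) ≤ g z - g (z + 1))
    {z : ℝ} (hz : 0 < z) : f z ≤ g z := by
  have htelescope : ∀ N : ℕ, ∀ z > 0, f z - f (z + N) ≤ g z - g (z + N) := by
    intro N
    induction N with
    | zero => simp
    | succ n ih =>
      intro z hz
      have hshift : z + ↑(n + 1) = z + 1 + n := by push_cast; ring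
      rw [hshift]
      linarith [ih (z + 1) (by linarith), hfg z hz]
  have hlim : Tendsto (fun N : ℕ => f z - f (z + N)) atTop (𝓝 (f z)) := by
    simpa using tendsto_const_nhds.sub
      (hf.comp (tendsto_atTop_add_const_left _ z tendsto_natCast_atTop_atTop))
  refine le_of_tendsto' hlim fun N => (htelescope N z hz).trans ?_
  linarith [hg (z + N) (by positivity)]

lemma inv_add_inv_two_mul_sq_le_deriv_psi {z : ℝ} (hz : 0 < z) :
    z⁻¹ + (2 * z ^ 2)⁻¹ ≤ deriv psi z := by
  refine le_of_forall_sub_add_one_le (f := fun t => t⁻¹ + (2 * t ^ 2)⁻¹) ?_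
    (fun _ ht => deriv_psi_nonneg ht) (fun t ht => ?_) hz
  · simpa using tendsto_inv_atTop_zero.add (tendsto_inv_atTop_zero.comp
      ((tendsto_pow_atTop two_ne_zero).const_mul_atTop (zero_lt_two' ℝ)))
  · have hgap : (t ^ 2)⁻¹ - (t⁻¹ + (2 * t ^ 2)⁻¹ - ((t + 1)⁻¹ + (2 * (t + 1) ^ 2)⁻¹)) =
        (2 * t ^ 2 * (t + 1) ^ 2)⁻¹ := by
      field_simp
      ring
    rw [deriv_psi_add_one ht, sub_sub_cancel]
    linarith [inv_pos.2 (by positivity : (0 : ℝ) < 2 * t ^ 2 * (t + 1) ^ 2)]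

/- The rational part of `h` is `(3x² + 2xy + x) / (2s(s + 1))` with `s = x + y`; the first term
below is its quotient-rule derivative. -/
lemma hasDerivAt_h {x y : ℝ} (hxy : 0 < x + y) :
    HasDerivAt (fun t => h t y)
      (((6 * x + 2 * y + 1) * (x + y) * (x + y + 1)
          - (3 * x ^ 2 + 2 * x * y + x) * (2 * (x + y) + 1))
        / (2 * (x + y) ^ 2 * (x + y + 1) ^ 2) - deriv psi (x + y + 1)) x := by
  have hz : 0 < x + y + 1 := by linarith
  have hs : HasDerivAt (fun t => t + y) 1 x := (hasDerivAt_id' x).add_const y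
  have hrat := ((hasDerivAt_const x 1).fun_div (hs.add_const 1) hz.ne').fun_mul
    ((hasDerivAt_id' x).fun_add
      (((hasDerivAt_id' x).fun_mul ((hasDerivAt_id' x).add_const 1)).fun_div
        (hs.const_mul 2) (by positivity)))
  have hpsi := (differentiableAt_psi hz).hasDerivAt.comp x (hs.add_const 1)
  refine ((hrat.fun_sub hpsi).add_const (psi (y + 1))).congr_deriv ?_
  field_simp
  ring

theorem stmt_19 (x y : ℝ) (hx : 1 / Real.sqrt 2 < x) (hy : 0 < y) :
    deriv (fun t => h t y) x ≤
      ((1 - 2 * x ^ 2) * y - 2 * x ^ 3 - x ^ 2) / (2 * (x + y) ^ 2 * (x + y + 1) ^ 2) ∧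
    ((1 - 2 * x ^ 2) * y - 2 * x ^ 3 - x ^ 2) / (2 * (x + y) ^ 2 * (x + y + 1) ^ 2) < 0 := by
  have hx0 : 0 < x := lt_trans (by positivity) hx
  have hx2 : 1 < 2 * x ^ 2 := by
    have hsq := pow_lt_pow_left₀ hx (by positivity) two_ne_zero
    rw [div_pow, one_pow, sq_sqrt zero_le_two] at hsq
    linarith
  have hxy : 0 < x + y := by linarith
  refine ⟨?_, div_neg_of_neg_of_pos (by nlinarith) (by positivity)⟩
  have hpsi := inv_add_inv_two_mul_sq_le_deriv_psi (show 0 < x + y + 1 by linarith)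
  have hbound : ((6 * x + 2 * y + 1) * (x + y) * (x + y + 1)
        - (3 * x ^ 2 + 2 * x * y + x) * (2 * (x + y) + 1)) / (2 * (x + y) ^ 2 * (x + y + 1) ^ 2)
      - ((x + y + 1)⁻¹ + (2 * (x + y + 1) ^ 2)⁻¹)
      = ((1 - 2 * x ^ 2) * y - 2 * x ^ 3 - x ^ 2) / (2 * (x + y) ^ 2 * (x + y + 1) ^ 2) := by
    field_simp
    ring
  rw [(hasDerivAt_h hxy).deriv, ← hbound]
  linarith
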